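/- (Iteration lemma) Let φ : [0, R₀] → ℝ be non-negative and non-decreasing, and suppose there are constants C₁, C₂ ≥ 0, exponents α₁ > α₂ > 0, and ε ≥ 0 such that φ(r) ≤ C₁ ((r/ρ)^{α₁} + ε) φ(ρ) + C₂ ρ^{α₂} for all 0 < r ≤ ρ ≤ ρ₀ ≤ R₀. Then there exist ε₀ > 0 and c > 0, depending only on C₁, α₁, α₂, such that if ε ≤ ε₀, then φ(r) ≤ c ((r/ρ)^{α₂} φ(ρ) + C₂ r^{α₂}) for all 0 < r ≤ ρ ≤ ρ₀. -/

import Mathlib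

/-!
Choose `α₂ < γ < α₁` and a ratio `τ ∈ (0, 1)` so small that `C₁ (τ^α₁ + ε) ≤ τ^γ` whenever
`ε ≤ ε₀ := τ^α₁`. The hypothesis at the pair `(τ s, s)` then gives the one-step decay
`φ (τ s) ≤ τ^γ φ s + C₂ s^α₂`, and since `τ^γ < τ^α₂` the error terms of the iterates sum to a
geometric series: `φ (τ^k ρ) ≤ τ^(k α₂) (φ ρ + C₂ ρ^α₂ / (τ^α₂ - τ^γ))`. Monotonicity of `φ`
interpolates between consecutive radii `τ^(k+1) ρ < r ≤ τ^k ρ`, at the cost of a factor `τ^(-α₂)`.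
-/

open Set

lemma exists_mul_rpow_le_rpow {C α β : ℝ} (hC : 0 ≤ C) (hβα : β < α) :
    ∃ τ : ℝ, 0 < τ ∧ τ < 1 ∧ C * τ ^ α ≤ τ ^ β := by
  have hC2 : 0 < (C + 2)⁻¹ := by positivity
  refine ⟨(C + 2)⁻¹ ^ (α - β)⁻¹, by positivity,
    Real.rpow_lt_one hC2.le (inv_lt_one_of_one_lt₀ (by linarith)) (by simpa using hβα), ?_⟩
  set τ := (C + 2)⁻¹ ^ (α - β)⁻¹
  have hτ : 0 < τ := by positivity
  have hgap : τ ^ (α - β) = (C + 2)⁻¹ := by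
    rw [← Real.rpow_mul hC2.le, inv_mul_cancel₀ (sub_ne_zero.2 hβα.ne'), Real.rpow_one]
  have hsplit : τ ^ α = τ ^ β * (C + 2)⁻¹ := by
    rw [← hgap, ← Real.rpow_add hτ, add_sub_cancel]
  have hfrac : C * (C + 2)⁻¹ ≤ 1 := by
    rw [← div_eq_mul_inv, div_le_one (by linarith)]; linarith
  calc C * τ ^ α = τ ^ β * (C * (C + 2)⁻¹) := by rw [hsplit]; ring
    _ ≤ τ ^ β * 1 := by gcongr
    _ = τ ^ β := mul_one _

section Iteration

variable {φ : ℝ → ℝ} {τ θ β B ρ : ℝ}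

lemma le_rpow_pow_mul_of_step (hτ : 0 < τ) (hτ1 : τ ≤ 1) (hθ : 0 ≤ θ) (hθτ : θ < τ ^ β)
    (hB : 0 ≤ B) (hρ : 0 < ρ) (hφρ : 0 ≤ φ ρ)
    (hstep : ∀ s ∈ Ioc 0 ρ, φ (τ * s) ≤ θ * φ s + B * s ^ β) (k : ℕ) :
    φ (τ ^ k * ρ) ≤ (τ ^ β) ^ k * (φ ρ + B * ρ ^ β / (τ ^ β - θ)) := by
  set P := φ ρ + B * ρ ^ β / (τ ^ β - θ)
  have hgap : 0 < τ ^ β - θ := sub_pos.2 hθτ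
  have hBρ : 0 ≤ B * ρ ^ β / (τ ^ β - θ) := by positivity
  -- `P` absorbs one error term per step because `θ P + B ρ^β = τ^β P - (τ^β - θ) φ ρ`.
  have habsorb : θ * P + B * ρ ^ β ≤ τ ^ β * P := by
    have hcancel : (τ ^ β - θ) * (B * ρ ^ β / (τ ^ β - θ)) = B * ρ ^ β :=
      mul_div_cancel₀ _ hgap.ne'
    nlinarith [mul_nonneg hgap.le hφρ]
  induction k with
  | zero => simpa only [pow_zero, one_mul] using le_add_of_nonneg_right hBρ
  | succ k ih =>
    have hτk : 0 < τ ^ k := pow_pos hτ k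
    have hradius : τ ^ k * ρ ∈ Ioc 0 ρ :=
      ⟨by positivity, mul_le_of_le_one_left hρ.le (pow_le_one₀ hτ.le hτ1)⟩
    have hscale : (τ ^ k * ρ) ^ β = (τ ^ β) ^ k * ρ ^ β := by
      rw [Real.mul_rpow hτk.le hρ.le, Real.rpow_pow_comm hτ.le]
    calc φ (τ ^ (k + 1) * ρ) = φ (τ * (τ ^ k * ρ)) := by ring_nf
      _ ≤ θ * φ (τ ^ k * ρ) + B * (τ ^ k * ρ) ^ β := hstep _ hradius
      _ ≤ θ * ((τ ^ β) ^ k * P) + B * ((τ ^ β) ^ k * ρ ^ β) := by rw [hscale]; gcongr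
      _ = (τ ^ β) ^ k * (θ * P + B * ρ ^ β) := by ring
      _ ≤ (τ ^ β) ^ k * (τ ^ β * P) := by gcongr
      _ = (τ ^ β) ^ (k + 1) * P := by ring

lemma le_mul_rpow_of_step (hτ : 0 < τ) (hτ1 : τ < 1) (hθ : 0 ≤ θ) (hθτ : θ < τ ^ β)
    (hβ : 0 < β) (hB : 0 ≤ B) (hρ : 0 < ρ) (hφρ : 0 ≤ φ ρ) (hmono : MonotoneOn φ (Ioc 0 ρ))
    (hstep : ∀ s ∈ Ioc 0 ρ, φ (τ * s) ≤ θ * φ s + B * s ^ β) {r : ℝ} (hr : r ∈ Ioc 0 ρ) :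
    φ r ≤ (1 + (τ ^ β - θ)⁻¹) / τ ^ β * ((r / ρ) ^ β * φ ρ + B * r ^ β) := by
  obtain ⟨hr0, hrρ⟩ := hr
  have hgap : 0 < τ ^ β - θ := sub_pos.2 hθτ
  have hτβ : 0 < τ ^ β := by positivity
  obtain ⟨k, hk_lt, hk_le⟩ := exists_nat_pow_near_of_lt_one (div_pos hr0 hρ)
    ((div_le_one hρ).2 hrρ) hτ hτ1
  have hτk : 0 < τ ^ k := pow_pos hτ k
  have hradius : τ ^ k * ρ ∈ Ioc 0 ρ :=
    ⟨by positivity, mul_le_of_le_one_left hρ.le (pow_le_one₀ hτ.le hτ1.le)⟩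
  have hmono_step : φ r ≤ φ (τ ^ k * ρ) :=
    hmono ⟨hr0, hrρ⟩ hradius ((div_le_iff₀ hρ).1 hk_le)
  have hratio : τ ^ β * (τ ^ β) ^ k < (r / ρ) ^ β := by
    have := Real.rpow_lt_rpow (by positivity) hk_lt hβ
    rwa [pow_succ, Real.mul_rpow hτk.le hτ.le, ← Real.rpow_pow_comm hτ.le, mul_comm] at this
  have hX : 0 ≤ (r / ρ) ^ β * φ ρ := by positivity
  have hY : 0 ≤ B * r ^ β := by positivity
  have hrρβ : (r / ρ) ^ β * ρ ^ β = r ^ β := by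
    rw [Real.div_rpow hr0.le hρ.le, div_mul_cancel₀ _ (by positivity)]
  calc φ r ≤ (τ ^ β) ^ k * (φ ρ + B * ρ ^ β / (τ ^ β - θ)) :=
        hmono_step.trans (le_rpow_pow_mul_of_step hτ hτ1.le hθ hθτ hB hρ hφρ hstep k)
    _ ≤ (r / ρ) ^ β / τ ^ β * (φ ρ + B * ρ ^ β / (τ ^ β - θ)) := by
        gcongr
        rw [le_div_iff₀ hτβ, mul_comm]
        exact hratio.le
    _ = ((r / ρ) ^ β * φ ρ + (τ ^ β - θ)⁻¹ * (B * ((r / ρ) ^ β * ρ ^ β))) / τ ^ β := by ring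
    _ = ((r / ρ) ^ β * φ ρ + (τ ^ β - θ)⁻¹ * (B * r ^ β)) / τ ^ β := by rw [hrρβ]
    _ ≤ (1 + (τ ^ β - θ)⁻¹) / τ ^ β * ((r / ρ) ^ β * φ ρ + B * r ^ β) := by
        rw [div_mul_eq_mul_div]
        gcongr
        nlinarith [mul_nonneg (inv_nonneg.2 hgap.le) hX]

end Iteration

theorem stmt_4 (C₁ α₁ α₂ : ℝ) (hC₁ : 0 ≤ C₁) (hα₂ : 0 < α₂) (hα : α₂ < α₁) :
    ∃ ε₀ > (0 : ℝ), ∃ c > (0 : ℝ),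
      ∀ (R₀ ρ₀ C₂ ε : ℝ) (φ : ℝ → ℝ),
        0 < R₀ → 0 < ρ₀ → ρ₀ ≤ R₀ → 0 ≤ C₂ → 0 ≤ ε →
        (∀ x ∈ Set.Icc 0 R₀, 0 ≤ φ x) →
        (∀ x ∈ Set.Icc 0 R₀, ∀ y ∈ Set.Icc 0 R₀, x ≤ y → φ x ≤ φ y) →
        (∀ r ρ : ℝ, 0 < r → r ≤ ρ → ρ ≤ ρ₀ →
          φ r ≤ C₁ * ((r / ρ) ^ α₁ + ε) * φ ρ + C₂ * ρ ^ α₂) →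
        ε ≤ ε₀ →
        ∀ r ρ : ℝ, 0 < r → r ≤ ρ → ρ ≤ ρ₀ →
          φ r ≤ c * ((r / ρ) ^ α₂ * φ ρ + C₂ * r ^ α₂) := by
  obtain ⟨γ, hα₂γ, hγα₁⟩ := exists_between hα
  obtain ⟨τ, hτ, hτ1, hτγ⟩ := exists_mul_rpow_le_rpow (by positivity : 0 ≤ 2 * C₁) hγα₁
  have hθτ : τ ^ γ < τ ^ α₂ := Real.rpow_lt_rpow_of_exponent_gt hτ hτ1 hα₂γ
  have hgap : 0 < τ ^ α₂ - τ ^ γ := sub_pos.2 hθτ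
  refine ⟨τ ^ α₁, by positivity, (1 + (τ ^ α₂ - τ ^ γ)⁻¹) / τ ^ α₂, by positivity, ?_⟩
  intro R₀ ρ₀ C₂ ε φ _ _ hρ₀R₀ hC₂ _ hφ0 hmono hiter hεε₀ r ρ hr hrρ hρρ₀
  have hsub : Ioc 0 ρ ⊆ Icc 0 R₀ := fun s hs => ⟨hs.1.le, hs.2.trans (hρρ₀.trans hρ₀R₀)⟩
  have hρ : 0 < ρ := hr.trans_le hrρ
  have hstep : ∀ s ∈ Ioc 0 ρ, φ (τ * s) ≤ τ ^ γ * φ s + C₂ * s ^ α₂ := by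
    rintro s ⟨hs, hsρ⟩
    have hcoef : C₁ * (τ ^ α₁ + ε) ≤ τ ^ γ := by nlinarith
    have h := hiter (τ * s) s (by positivity) (mul_le_of_le_one_left hs.le hτ1.le) (hsρ.trans hρρ₀)
    rw [mul_div_cancel_right₀ _ hs.ne'] at h
    exact h.trans (by gcongr; exact hφ0 s (hsub ⟨hs, hsρ⟩))
  exact le_mul_rpow_of_step hτ hτ1 (by positivity) hθτ hα₂ hC₂ hρ (hφ0 ρ (hsub ⟨hρ, le_rfl⟩))
    (MonotoneOn.mono (fun x hx y hy => hmono x hx y hy) hsub) hstep ⟨hr, hrρ⟩
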